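/- The constant τ := liminf_{m→∞} m^{2/3}·inf{ E(Y) : Y ⊆ Q, #Y = m } satisfies τ ≥ (2π/5)·ω₃^{−5/3}, where ω₃ := 4π/3. -/

import Mathlib

/-!
Lower bound: the balls of radius `t` around the `m` points of `Y` cover volume at most
`m ω₃ t³`, and every other point of `Q` contributes at least `t²` to `E(Y)`, so
`E(Y) ≥ t² (1 - m ω₃ t³)`. The choice `t = (4/5) (m ω₃)^{-1/3}` gives
`m^{2/3} E(Y) ≥ (976/3125) ω₃^{-2/3} ≥ (3/10) ω₃^{-2/3} = (2π/5) ω₃^{-5/3}`.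
Since `τ` is a `liminf` in `ℝ`, the sequence must also be bounded above infinitely often; the
cubic grid `{v/k : v ∈ {0,…,k}³}` shows `m^{2/3} E ≤ 12` for `m = (k+1)³`.
-/

open MeasureTheory

noncomputable section

/-- Euclidean 3-space. -/
abbrev E3 := EuclideanSpace ℝ (Fin 3)

/-- The closed unit cube Q = [0,1]³. -/
def Qcube : Set E3 := {x | ∀ i, x i ∈ Set.Icc (0 : ℝ) 1}

/-- The quantization energy E(Y) = ∫_Q dist(x,Y)² dx. -/
def quantE (Y : Finset E3) : ℝ := ∫ x in Qcube, (Metric.infDist x (↑Y : Set E3)) ^ 2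

/-- The Voronoi cell of a generator y ∈ Y, relative to Q. -/
def vorCell (Y : Finset E3) (y : E3) : Set E3 :=
  {x ∈ Qcube | ∀ z ∈ Y, dist x y ≤ dist x z}

/-- Y is a minimizer of the quantization energy among n-point subsets of Q. -/
def IsMinimizer (n : ℕ) (Y : Finset E3) : Prop :=
  (↑Y : Set E3) ⊆ Qcube ∧ Y.card = n ∧
    ∀ Z : Finset E3, (↑Z : Set E3) ⊆ Qcube → Z.card = n → quantE Y ≤ quantE Z

/-- ω₃ = 4π/3, the volume of the unit ball in ℝ³. -/
def omega3 : ℝ := 4 * Real.pi / 3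

/-- Γ₁ = (2/5)^{2/3} / 40. -/
def Gamma1 : ℝ := ((2 / 5 : ℝ) ^ ((2 : ℝ) / 3)) / 40

/-- Γ₃ = ω₃^{-1/5} Γ₁^{1/5}. -/
def Gamma3 : ℝ := omega3 ^ (-(1 : ℝ) / 5) * Gamma1 ^ ((1 : ℝ) / 5)

/-- Γ₅ = (1/4)(√(1 + 2⁴·3³/(5²·10³)) − 1) Γ₃. -/
def Gamma5 : ℝ :=
  (1 / 4) * (Real.sqrt (1 + (2 ^ 4 * 3 ^ 3 : ℝ) / (5 ^ 2 * 10 ^ 3)) - 1) * Gamma3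

/-- Γ₄, the diameter upper-bound constant. -/
def Gamma4 : ℝ :=
  (2 * (12 : ℝ) ^ ((1 : ℝ) / 4) * (16 : ℝ) ^ ((1 : ℝ) / 3) /
      (Real.pi ^ ((1 : ℝ) / 4) * omega3 ^ ((1 : ℝ) / 12))) *
    (Real.sqrt (1 + (2 ^ 4 * 3 ^ 3 : ℝ) / (5 ^ 2 * 10 ^ 3)) - 1) ^ (-(1 : ℝ) / 2) *
    ((5 ^ 2 * 10 ^ 3 : ℝ) / (2 ^ 2 * 3 ^ 3)) ^ ((1 : ℝ) / 4)

/-- τ = liminf_{m→∞} m^{2/3} · inf { E(Y) : Y ⊆ Q, #Y = m }. -/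
def tau : ℝ :=
  Filter.liminf
    (fun m : ℕ =>
      (m : ℝ) ^ ((2 : ℝ) / 3) *
        sInf {e : ℝ | ∃ Z : Finset E3, (↑Z : Set E3) ⊆ Qcube ∧ Z.card = m ∧ e = quantE Z})
    Filter.atTop

open Metric

section InfDistEnergy

variable {α : Type*} [PseudoMetricSpace α] [MeasurableSpace α] (μ : Measure α) {Y : Finset α}

lemma measureReal_infDist_lt_le_sum (hY : Y.Nonempty) (t : ℝ) :
    μ.real {x | infDist x (Y : Set α) < t} ≤ ∑ y ∈ Y, μ.real (ball y t) := by
  have hcover : {x | infDist x (Y : Set α) < t} = ⋃ y ∈ Y, ball y t := by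
    ext x
    simp [infDist_lt_iff (Finset.coe_nonempty.mpr hY)]
  rw [hcover]
  exact measureReal_biUnion_finset_le Y _

/-- Markov's inequality for `infDist x Y ^ 2` at level `t²`. -/
lemma sq_mul_sub_le_integral_infDist_sq [OpensMeasurableSpace α] [IsFiniteMeasure μ]
    (hY : Y.Nonempty) (hint : Integrable (fun x => infDist x (Y : Set α) ^ 2) μ)
    {t : ℝ} (ht : 0 ≤ t) :
    t ^ 2 * (μ.real Set.univ - ∑ y ∈ Y, μ.real (ball y t)) ≤
      ∫ x, infDist x (Y : Set α) ^ 2 ∂μ := by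
  set near := {x | infDist x (Y : Set α) < t}
  have hnear : MeasurableSet near :=
    measurableSet_lt (continuous_infDist_pt _).measurable measurable_const
  have hfar : nearᶜ ⊆ {x | t ^ 2 ≤ infDist x (Y : Set α) ^ 2} := fun x hx =>
    pow_le_pow_left₀ ht (not_lt.mp hx) 2
  calc t ^ 2 * (μ.real Set.univ - ∑ y ∈ Y, μ.real (ball y t))
      ≤ t ^ 2 * μ.real {x | t ^ 2 ≤ infDist x (Y : Set α) ^ 2} := by
        gcongr
        linarith [measureReal_add_measureReal_compl (μ := μ) hnear,
          measureReal_mono (μ := μ) hfar, measureReal_infDist_lt_le_sum μ hY t]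
    _ ≤ ∫ x, infDist x (Y : Set α) ^ 2 ∂μ :=
        mul_meas_ge_le_integral_of_nonneg (ae_of_all _ fun x => sq_nonneg _) hint _

end InfDistEnergy

lemma Qcube_eq_preimage_Icc : Qcube = WithLp.ofLp ⁻¹' Set.Icc 0 1 := by
  ext x
  simp [Qcube, Pi.le_def, forall_and]

lemma isCompact_Qcube : IsCompact Qcube := by
  rw [Qcube_eq_preimage_Icc]
  exact (PiLp.continuousLinearEquiv 2 ℝ _).toHomeomorph.isCompact_preimage.mpr isCompact_Icc

lemma volume_Qcube : volume Qcube = 1 := by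
  rw [Qcube_eq_preimage_Icc, (PiLp.volume_preserving_ofLp (Fin 3)).measure_preimage
    measurableSet_Icc.nullMeasurableSet, Real.volume_Icc_pi]
  simp

lemma Qcube_infinite : Qcube.Infinite := fun hfin => by
  simpa [volume_Qcube] using hfin.measure_zero volume

lemma omega3_pos : 0 < omega3 := by
  unfold omega3
  positivity

lemma measureReal_ball_E3 (y : E3) {t : ℝ} (ht : 0 ≤ t) :
    volume.real (ball y t) = omega3 * t ^ 3 := by
  rw [measureReal_def, EuclideanSpace.volume_ball_fin_three, ENNReal.toReal_mul,
    ENNReal.toReal_pow, ENNReal.toReal_ofReal ht, ENNReal.toReal_ofReal (by positivity), omega3]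
  ring

lemma sq_mul_sub_le_quantE {Y : Finset E3} (hY : Y.Nonempty) {t : ℝ} (ht : 0 ≤ t) :
    t ^ 2 * (1 - Y.card * (omega3 * t ^ 3)) ≤ quantE Y := by
  have : IsFiniteMeasure (volume.restrict Qcube) := ⟨by simp [volume_Qcube]⟩
  have hint : IntegrableOn (fun x => infDist x (Y : Set E3) ^ 2) Qcube :=
    ((continuous_infDist_pt _).pow 2).continuousOn.integrableOn_compact isCompact_Qcube
  have hballs : ∑ y ∈ Y, (volume.restrict Qcube).real (ball y t) ≤ Y.card * (omega3 * t ^ 3) :=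
    calc ∑ y ∈ Y, (volume.restrict Qcube).real (ball y t)
        ≤ ∑ y ∈ Y, volume.real (ball y t) := by
          gcongr with y
          rw [measureReal_restrict_apply measurableSet_ball]
          exact measureReal_mono Set.inter_subset_left
      _ = Y.card * (omega3 * t ^ 3) := by simp [measureReal_ball_E3 _ ht]
  have hμ : (volume.restrict Qcube).real Set.univ = 1 := by
    simp [measureReal_def, volume_Qcube]
  calc t ^ 2 * (1 - Y.card * (omega3 * t ^ 3))
      ≤ t ^ 2 * ((volume.restrict Qcube).real Set.univ
          - ∑ y ∈ Y, (volume.restrict Qcube).real (ball y t)) := by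
        rw [hμ]
        gcongr
    _ ≤ quantE Y := sq_mul_sub_le_integral_infDist_sq _ hY hint ht

def minEnergy (m : ℕ) : ℝ :=
  sInf {e : ℝ | ∃ Z : Finset E3, (↑Z : Set E3) ⊆ Qcube ∧ Z.card = m ∧ e = quantE Z}

lemma tau_eq_liminf_minEnergy :
    tau = Filter.liminf (fun m : ℕ => (m : ℝ) ^ ((2 : ℝ) / 3) * minEnergy m) Filter.atTop :=
  rfl

lemma sq_mul_sub_le_minEnergy {m : ℕ} (hm : 1 ≤ m) {t : ℝ} (ht : 0 ≤ t) :
    t ^ 2 * (1 - m * (omega3 * t ^ 3)) ≤ minEnergy m := by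
  obtain ⟨Z, hZ, hcard⟩ := Qcube_infinite.exists_subset_card_eq m
  refine le_csInf ⟨_, Z, hZ, hcard, rfl⟩ ?_
  rintro _ ⟨Y, -, rfl, rfl⟩
  exact sq_mul_sub_le_quantE (Finset.card_pos.mp hm) ht

lemma rpow_one_third_pow {x : ℝ} (hx : 0 ≤ x) (n : ℕ) :
    (x ^ ((1 : ℝ) / 3)) ^ n = x ^ ((n : ℝ) / 3) := by
  rw [← Real.rpow_natCast, ← Real.rpow_mul hx]
  ring_nf

lemma le_rpow_two_thirds_mul_minEnergy {m : ℕ} (hm : 1 ≤ m) :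
    976 / 3125 * omega3 ^ (-(2 : ℝ) / 3) ≤ (m : ℝ) ^ ((2 : ℝ) / 3) * minEnergy m := by
  set a := (m : ℝ) ^ ((1 : ℝ) / 3)
  set b := omega3 ^ ((1 : ℝ) / 3)
  have ha : 0 < a := Real.rpow_pos_of_pos (by exact_mod_cast hm) _
  have hb : 0 < b := Real.rpow_pos_of_pos omega3_pos _
  have ha3 : a ^ 3 = m := by rw [rpow_one_third_pow m.cast_nonneg]; norm_num
  have hb3 : b ^ 3 = omega3 := by rw [rpow_one_third_pow omega3_pos.le]; norm_num
  have ha2 : a ^ 2 = (m : ℝ) ^ ((2 : ℝ) / 3) := by rw [rpow_one_third_pow m.cast_nonneg]; norm_num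
  have hb2 : (b ^ 2)⁻¹ = omega3 ^ (-(2 : ℝ) / 3) := by
    rw [rpow_one_third_pow omega3_pos.le, ← Real.rpow_neg omega3_pos.le]; norm_num
  have key := sq_mul_sub_le_minEnergy hm (t := 4 / (5 * a * b)) (by positivity)
  rw [← ha3, ← hb3] at key
  rw [← ha2, ← hb2]
  calc 976 / 3125 * (b ^ 2)⁻¹
      = a ^ 2 * ((4 / (5 * a * b)) ^ 2 * (1 - a ^ 3 * (b ^ 3 * (4 / (5 * a * b)) ^ 3))) := by
        field_simp
        ring
    _ ≤ a ^ 2 * minEnergy m := by gcongr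

lemma two_pi_div_five_mul_omega3_rpow :
    2 * Real.pi / 5 * omega3 ^ (-(5 : ℝ) / 3) = 3 / 10 * omega3 ^ (-(2 : ℝ) / 3) := by
  have h : omega3 ^ (-(5 : ℝ) / 3) = omega3 ^ (-(2 : ℝ) / 3) * omega3⁻¹ := by
    rw [← Real.rpow_neg_one, ← Real.rpow_add omega3_pos]
    norm_num
  rw [h, omega3]
  field_simp
  ring

lemma quantE_le_of_forall_infDist_sq_le {Y : Finset E3} {C : ℝ}
    (hC : ∀ x ∈ Qcube, infDist x (Y : Set E3) ^ 2 ≤ C) : quantE Y ≤ C := by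
  have h := norm_setIntegral_le_of_norm_le_const (μ := volume) (by simp [volume_Qcube])
    fun x hx => (Real.norm_of_nonneg (sq_nonneg (infDist x (Y : Set E3)))).trans_le (hC x hx)
  rw [measureReal_def, volume_Qcube, ENNReal.toReal_one, mul_one] at h
  exact (le_abs_self _).trans h

lemma minEnergy_card_le_quantE {Z : Finset E3} (hZ : (Z : Set E3) ⊆ Qcube) :
    minEnergy Z.card ≤ quantE Z :=
  csInf_le ⟨0, by rintro _ ⟨Y, -, -, rfl⟩; exact integral_nonneg fun x => sq_nonneg _⟩
    ⟨Z, hZ, rfl, rfl⟩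

open scoped Classical in
def cubeGrid (k : ℕ) : Finset E3 :=
  Finset.univ.image fun v : Fin 3 → Fin (k + 1) => WithLp.toLp 2 fun j => (v j : ℝ) / k

lemma cubeGrid_subset_Qcube (k : ℕ) : (cubeGrid k : Set E3) ⊆ Qcube := by
  simp only [cubeGrid, Finset.coe_image, Finset.coe_univ, Set.image_univ, Set.range_subset_iff]
  intro v j
  exact ⟨by positivity, div_le_one_of_le₀ (by exact_mod_cast Nat.lt_succ_iff.mp (v j).is_lt)
    k.cast_nonneg⟩

lemma card_cubeGrid {k : ℕ} (hk : 1 ≤ k) : (cubeGrid k).card = (k + 1) ^ 3 := by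
  have hk' : (k : ℝ) ≠ 0 := by positivity
  rw [cubeGrid, Finset.card_image_of_injective, Finset.card_univ, Fintype.card_fun,
    Fintype.card_fin, Fintype.card_fin]
  intro v w hvw
  funext j
  have := congrFun (congrArg WithLp.ofLp hvw) j
  simp only [div_left_inj' hk', Nat.cast_inj] at this
  exact Fin.ext this

lemma sq_sub_floor_mul_div_le {k : ℕ} (hk : 1 ≤ k) {a : ℝ} (ha : 0 ≤ a) :
    (a - ⌊k * a⌋₊ / k) ^ 2 ≤ 1 / k ^ 2 := by
  have hk' : (0 : ℝ) < k := by exact_mod_cast hk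
  have hlo := Nat.floor_le (by positivity : 0 ≤ k * a)
  have hhi := Nat.lt_floor_add_one (k * a)
  rw [show a - ⌊k * a⌋₊ / k = (k * a - ⌊k * a⌋₊) / k by field_simp, div_pow]
  gcongr
  nlinarith

lemma infDist_cubeGrid_sq_le {k : ℕ} (hk : 1 ≤ k) {x : E3} (hx : x ∈ Qcube) :
    infDist x (cubeGrid k : Set E3) ^ 2 ≤ 3 / k ^ 2 := by
  let v : Fin 3 → Fin (k + 1) := fun j =>
    ⟨⌊k * x j⌋₊, Nat.lt_succ_of_le (Nat.floor_le_of_le (by nlinarith [(hx j).2]))⟩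
  have hmem : WithLp.toLp 2 (fun j => (v j : ℝ) / k) ∈ (cubeGrid k : Set E3) := by
    simp [cubeGrid]
  calc infDist x (cubeGrid k : Set E3) ^ 2 ≤ dist x (WithLp.toLp 2 fun j => (v j : ℝ) / k) ^ 2 :=
        pow_le_pow_left₀ infDist_nonneg (infDist_le_dist_of_mem hmem) 2
    _ = ∑ j, (x j - ⌊k * x j⌋₊ / k) ^ 2 := by
        rw [EuclideanSpace.dist_eq, Real.sq_sqrt (by positivity)]
        simp [v, Real.dist_eq, sq_abs]
    _ ≤ ∑ _j : Fin 3, 1 / (k : ℝ) ^ 2 :=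
        Finset.sum_le_sum fun j _ => sq_sub_floor_mul_div_le hk (hx j).1
    _ = 3 / k ^ 2 := by
        rw [Finset.sum_const, Finset.card_univ, Fintype.card_fin, nsmul_eq_mul]
        ring

lemma rpow_two_thirds_mul_minEnergy_cube_le {k : ℕ} (hk : 1 ≤ k) :
    (((k + 1) ^ 3 : ℕ) : ℝ) ^ ((2 : ℝ) / 3) * minEnergy ((k + 1) ^ 3) ≤ 12 := by
  have hk' : (1 : ℝ) ≤ k := by exact_mod_cast hk
  have hmin : minEnergy ((k + 1) ^ 3) ≤ 3 / k ^ 2 := card_cubeGrid hk ▸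
    (minEnergy_card_le_quantE (cubeGrid_subset_Qcube k)).trans
      (quantE_le_of_forall_infDist_sq_le fun x hx => infDist_cubeGrid_sq_le hk hx)
  have hpow : (((k + 1) ^ 3 : ℕ) : ℝ) ^ ((2 : ℝ) / 3) = ((k : ℝ) + 1) ^ 2 := by
    rw [Nat.cast_pow, Nat.cast_succ, ← Real.rpow_natCast _ 3, ← Real.rpow_mul (by positivity)]
    norm_num
  rw [hpow]
  calc ((k : ℝ) + 1) ^ 2 * minEnergy ((k + 1) ^ 3) ≤ ((k : ℝ) + 1) ^ 2 * (3 / k ^ 2) := by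
        gcongr
    _ ≤ 12 := by
        rw [mul_div_assoc', div_le_iff₀ (by positivity)]
        nlinarith

theorem stmt_10 : tau ≥ (2 * Real.pi / 5) * omega3 ^ (-(5 : ℝ) / 3) := by
  have hcobdd : Filter.IsCoboundedUnder (· ≥ ·) Filter.atTop
      (fun m : ℕ => (m : ℝ) ^ ((2 : ℝ) / 3) * minEnergy m) :=
    Filter.IsCoboundedUnder.of_frequently_le (a := 12) <| Filter.frequently_atTop.mpr fun N =>
      ⟨(N + 2) ^ 3, by nlinarith [Nat.le_self_pow (by norm_num : 3 ≠ 0) (N + 2)],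
        rpow_two_thirds_mul_minEnergy_cube_le (by omega)⟩
  rw [ge_iff_le, tau_eq_liminf_minEnergy, two_pi_div_five_mul_omega3_rpow]
  refine Filter.le_liminf_of_le hcobdd (Filter.eventually_atTop.mpr ⟨1, fun m hm => ?_⟩)
  calc 3 / 10 * omega3 ^ (-(2 : ℝ) / 3) ≤ 976 / 3125 * omega3 ^ (-(2 : ℝ) / 3) :=
        mul_le_mul_of_nonneg_right (by norm_num) (Real.rpow_nonneg omega3_pos.le _)
    _ ≤ _ := le_rpow_two_thirds_mul_minEnergy hm
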